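/- arXiv:1702.06447 — 4 statements merged into one kernel-verified Lean document; each statement's English description precedes it below -/
import Mathlib

section
/- Let A be a finite-dimensional F-algebra, K/F a field extension, and M a finitely generated module over A_K = K ⊗_F A. Then there exists an intermediate field F ⊆ E ⊆ K with E finitely generated over F such that M descends to E, i.e., M ≅ K ⊗_E M₀ for some A_E-module M₀. -/
/-!
Fix a `K`-basis `b` of `M` and an `F`-basis `(aᵢ)` of `A`, and let `E` be the field generated
over `F` by the finitely many coordinates of the vectors `aᵢ • bⱼ` in the basis `b`. The
`E`-span of `b` is then stable under every `aᵢ`, hence under all of `A`, and it has `b` as an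
`E`-basis, so it is an `E`-form of `M`.
-/

open Submodule

/-- `M` (a module over `A_K = K ⊗_F A`, encoded as a `K`-module with a commuting
`A`-action, both compatible with the `F`-structure) descends to the intermediate
field `E` of `K/F`: there is an `A`-stable `E`-form `N ⊆ M` such that the natural
map `K ⊗_E N → M` is an isomorphism, i.e. `M ≅ K ⊗_E N` as `A_K`-modules. -/
def DescendsTo (F K A : Type) [Field F] [Field K] [Algebra F K]
    [Ring A] [Algebra F A]
    (M : Type) [AddCommGroup M] [Module F M] [Module K M] [Module A M]
    [IsScalarTower F K M] [IsScalarTower F A M] [SMulCommClass K A M]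
    (E : IntermediateField F K) : Prop :=
  ∃ N : Submodule E M, (∀ (a : A) (x : M), x ∈ N → a • x ∈ N) ∧
    IsBaseChange K N.subtype

namespace Module.Basis

variable {ι R S M : Type*} [CommRing R] [IsDomain R] [CommRing S] [Nontrivial S] [Algebra R S]
  [IsTorsionFree R S] [AddCommGroup M] [Module R M] [Module S M] [IsScalarTower R S M]

theorem isBaseChange_span (b : Basis ι S M) : IsBaseChange S (span R (Set.range b)).subtype := by
  let b' := (b.restrictScalars R).baseChange S
  let e := b'.equiv b (Equiv.refl ι)
  have he : e.toLinearMap.restrictScalars R ∘ₗ TensorProduct.mk R S _ 1 =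
      (span R (Set.range b)).subtype :=
    (b.restrictScalars R).ext fun i => by
      simpa [e, b', baseChange_apply] using b'.equiv_apply i b (Equiv.refl ι)
  exact .of_equiv e (LinearMap.congr_fun he)

variable (R) in
theorem apply_mem_span_of_repr_mem (b : Basis ι S M) (f : M →ₗ[S] M)
    (hf : ∀ i j, b.repr (f (b i)) j ∈ Set.range (algebraMap R S)) {x : M}
    (hx : x ∈ span R (Set.range b)) : f x ∈ span R (Set.range b) := by
  have : span R (Set.range b) ≤ (span R (Set.range b)).comap (f.restrictScalars R) :=
    span_le.2 <| Set.range_subset_iff.2 fun i => (b.mem_span_iff_repr_mem R _).2 (hf i)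
  exact this hx

end Module.Basis

theorem Submodule.smul_mem_of_span_eq_top {R A M : Type*} [CommSemiring R] [Semiring A]
    [Algebra R A] [AddCommMonoid M] [Module R M] [Module A M] [IsScalarTower R A M]
    (N : Submodule R M) {s : Set A} (hs : span R s = ⊤)
    (h : ∀ a ∈ s, ∀ x ∈ N, a • x ∈ N) (a : A) {x : M} (hx : x ∈ N) : a • x ∈ N := by
  have ha : a ∈ span R s := hs ▸ mem_top
  induction ha using span_induction with
  | mem a ha => exact h a ha x hx
  | zero => simp
  | add a a' _ _ iha iha' => simpa [add_smul] using N.add_mem iha iha'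
  | smul r a _ iha => simpa [smul_assoc] using N.smul_mem r iha

/-- Every finitely generated module over `A_K` descends to an
intermediate field `E` that is finitely generated over `F`. -/
theorem descends_to_finitelyGenerated_subfield
    (F K A : Type) [Field F] [Field K] [Algebra F K]
    [Ring A] [Algebra F A] [FiniteDimensional F A]
    (M : Type) [AddCommGroup M] [Module F M] [Module K M] [Module A M]
    [IsScalarTower F K M] [IsScalarTower F A M] [SMulCommClass K A M]
    [Module.Finite K M] :
    ∃ E : IntermediateField F K, E.FG ∧ DescendsTo F K A M E := by
  let b := Module.finBasis K M
  let a := Module.finBasis F A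
  let c : _ × _ × _ → K := fun p => b.repr (a p.1 • b p.2.1) p.2.2
  let E := IntermediateField.adjoin F (Set.range c)
  have : SMulCommClass A K M := .symm K A M
  have : IsScalarTower F E M := .of_algebraMap_smul fun r x => algebraMap_smul K r x
  have : Module.IsTorsionFree E K := FaithfulSMul.to_isTorsionFree E K
  have hc : ∀ p, c p ∈ E := fun p => IntermediateField.subset_adjoin F _ (Set.mem_range_self p)
  let N := span E (Set.range b)
  have stable_basis : ∀ i, ∀ m ∈ N.restrictScalars F, a i • m ∈ N.restrictScalars F :=
    fun i m hm => b.apply_mem_span_of_repr_mem E (DistribSMul.toLinearMap K M (a i))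
      (fun j k => ⟨⟨_, hc (i, j, k)⟩, rfl⟩) hm
  have stable : ∀ (x : A) (m : M), m ∈ N → x • m ∈ N := fun x _ =>
    (N.restrictScalars F).smul_mem_of_span_eq_top a.span_eq (Set.forall_mem_range.2 stable_basis) x
  exact ⟨E, IntermediateField.fg_adjoin_of_finite (Set.finite_range c), N, stable,
    b.isBaseChange_span⟩
end

section
/- Let A be the rational quaternion algebra A = ℚ⟨x,y⟩/(x² = y² = -1, xy = -yx), K/ℚ a field extension of characteristic 0, and M the 2-dimensional A_K-module given by x ↦ [[a,b],[b,-a]], y ↦ [[b,-a],[-a,-b]] for elements a, b ∈ K with a² + b² = -1. For an intermediate field ℚ ⊆ E ⊆ K, the following are equivalent: (a) M descends to E; (b) the quaternion algebra A splits over E; (c) there exist a₀, b₀ ∈ E with a₀² + b₀² = -1. -/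
/-!
An algebra map `ℍ[ℚ] → Mat₂(F)` sends `i` and `j` to anticommuting square roots of `-1`, and the
`(0, 0)` entries of the three relations between them already produce `a₀, b₀ ∈ F` with
`a₀² + b₀² = -1`; this gives (a) ⇒ (c) and (b) ⇒ (c).

Conversely, a solution `(a₀, b₀)` defines the quaternionic basis `i ↦ [[a₀, b₀], [b₀, -a₀]]`,
`j ↦ [[b₀, -a₀], [-a₀, -b₀]]` of `Mat₂(F)`. The induced map `F ⊗ ℍ → Mat₂(F)` is onto, hence
bijective since both sides have dimension `4`, which gives (b). Over `K`, the representations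
attached to `(a, b)` and to `(a₀, b₀)` are conjugate by an explicit matrix `[[p, q], [-q, p]]`
(a hands-on instance of Skolem–Noether), which gives (a).
-/

open TensorProduct Quaternion

variable {R F : Type*} [CommRing R] [Field F] [Algebra R F]

theorem exists_sq_add_sq_eq_neg_one_of_anticomm (u v : Matrix (Fin 2) (Fin 2) F)
    (hu : u * u = -1) (hv : v * v = -1) (huv : u * v = -(v * u)) :
    ∃ a₀ b₀ : F, a₀ ^ 2 + b₀ ^ 2 = -1 := by
  have hu₀₀ := congrFun (congrFun hu 0) 0
  have hv₀₀ := congrFun (congrFun hv 0) 0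
  have huv₀₀ := congrFun (congrFun huv 0) 0
  simp only [Matrix.mul_apply, Fin.sum_univ_two, Matrix.neg_apply, Matrix.one_apply_eq]
    at hu₀₀ hv₀₀ huv₀₀
  by_cases hu₁₀ : u 1 0 = 0
  · exact ⟨u 0 0, 0, by rw [hu₁₀] at hu₀₀; linear_combination hu₀₀⟩
  · refine ⟨v 1 0 / u 1 0, (u 1 0 * v 0 0 - u 0 0 * v 1 0) / u 1 0, ?_⟩
    field_simp
    linear_combination v 1 0 ^ 2 * hu₀₀ + u 1 0 ^ 2 * hv₀₀ - u 1 0 * v 1 0 * huv₀₀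

theorem exists_sq_add_sq_eq_neg_one_of_algHom (σ : ℍ[R] →ₐ[R] Matrix (Fin 2) (Fin 2) F) :
    ∃ a₀ b₀ : F, a₀ ^ 2 + b₀ ^ 2 = -1 := by
  let B := (QuaternionAlgebra.Basis.self R).compHom σ
  refine exists_sq_add_sq_eq_neg_one_of_anticomm B.i B.j ?_ ?_ ?_
  all_goals simp [B]

variable (R) in
def quaternionBasisOfSqAddSq {a b : F} (h : a ^ 2 + b ^ 2 = -1) :
    QuaternionAlgebra.Basis (Matrix (Fin 2) (Fin 2) F) (-1 : R) 0 (-1) where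
  i := !![a, b; b, -a]
  j := !![b, -a; -a, -b]
  k := !![0, 1; -1, 0]
  i_mul_i := by ext i j; fin_cases i <;> fin_cases j <;> simp [Matrix.mul_apply] <;> grind
  j_mul_j := by ext i j; fin_cases i <;> fin_cases j <;> simp [Matrix.mul_apply] <;> grind
  i_mul_j := by ext i j; fin_cases i <;> fin_cases j <;> simp [Matrix.mul_apply] <;> grind
  j_mul_i := by ext i j; fin_cases i <;> fin_cases j <;> simp [Matrix.mul_apply] <;> grind

-- `liftHom` has domain `ℍ[R,-1,0,-1]`, which `simp` and `rw` do not match against `ℍ[R]`.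
variable (R) in
noncomputable def quaternionRepOfSqAddSq {a b : F} (h : a ^ 2 + b ^ 2 = -1) :
    ℍ[R] →ₐ[R] Matrix (Fin 2) (Fin 2) F :=
  (quaternionBasisOfSqAddSq R h).liftHom

theorem quaternionRepOfSqAddSq_i {a b : F} (h : a ^ 2 + b ^ 2 = -1) :
    quaternionRepOfSqAddSq R h ⟨0, 1, 0, 0⟩ = !![a, b; b, -a] :=
  congrArg QuaternionAlgebra.Basis.i (QuaternionAlgebra.lift.symm_apply_apply _)

theorem quaternionRepOfSqAddSq_j {a b : F} (h : a ^ 2 + b ^ 2 = -1) :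
    quaternionRepOfSqAddSq R h ⟨0, 0, 1, 0⟩ = !![b, -a; -a, -b] :=
  congrArg QuaternionAlgebra.Basis.j (QuaternionAlgebra.lift.symm_apply_apply _)

theorem nonempty_algEquiv_matrix_of_sq_add_sq [NeZero (2 : F)] {a b : F}
    (h : a ^ 2 + b ^ 2 = -1) : Nonempty ((F ⊗[R] ℍ[R]) ≃ₐ[F] Matrix (Fin 2) (Fin 2) F) := by
  let B := quaternionBasisOfSqAddSq R h
  let f : (F ⊗[R] ℍ[R]) →ₐ[F] Matrix (Fin 2) (Fin 2) F :=
    Algebra.TensorProduct.lift (Algebra.ofId F _) B.liftHom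
      fun x y => Algebra.commute_algebraMap_left x (B.liftHom y)
  have hf (c : F) (q : ℍ[R]) : f (c ⊗ₜ q) = c • B.lift q := by
    rw [Algebra.smul_def]
    exact Algebra.TensorProduct.lift_tmul _ _ _ c q
  have hsurj : Function.Surjective f := by
    intro m
    have h2 : (2 : F) ≠ 0 := two_ne_zero
    -- `a • i + b • j` and `b • i - a • j` map to `-[[1, 0], [0, -1]]` and `-[[0, 1], [1, 0]]`
    let d := (m 0 0 - m 1 1) / 2
    let s := (m 0 1 + m 1 0) / 2
    let Q : QuaternionAlgebra.Basis ℍ[R] (-1 : R) 0 (-1) := QuaternionAlgebra.Basis.self R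
    refine ⟨((m 0 0 + m 1 1) / 2) ⊗ₜ 1 + (-(a * d + b * s)) ⊗ₜ Q.i + (a * s - b * d) ⊗ₜ Q.j
      + ((m 0 1 - m 1 0) / 2) ⊗ₜ Q.k, ?_⟩
    simp only [map_add, hf]
    ext i j
    fin_cases i <;> fin_cases j <;>
      simp [QuaternionAlgebra.Basis.lift, B, quaternionBasisOfSqAddSq, Q, d, s] <;> grind
  let bT : Module.Basis (Fin 4) F (F ⊗[R] ℍ[R]) :=
    (QuaternionAlgebra.basisOneIJK (-1 : R) 0 (-1)).baseChange F
  have : FiniteDimensional F (F ⊗[R] ℍ[R]) := bT.finiteDimensional_of_finite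
  have hrank : Module.finrank F (F ⊗[R] ℍ[R]) = Module.finrank F (Matrix (Fin 2) (Fin 2) F) := by
    rw [Module.finrank_eq_card_basis bT, Module.finrank_matrix]
    simp
  have hinj : Function.Injective f :=
    (LinearMap.injective_iff_surjective_of_finrank_eq_finrank hrank (f := f.toLinearMap)).2 hsurj
  exact ⟨AlgEquiv.ofBijective f ⟨hinj, hsurj⟩⟩

theorem exists_mul_eq_mul_of_sq_add_sq [NeZero (2 : F)] {a b α β : F}
    (hab : a ^ 2 + b ^ 2 = -1) (hαβ : α ^ 2 + β ^ 2 = -1) :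
    ∃ p q : F, p ^ 2 + q ^ 2 ≠ 0 ∧ (a - α) * p = (b + β) * q ∧ (b - β) * p = -((a + α) * q) := by
  -- Both candidate solutions below work; their values of `p ^ 2 + q ^ 2` add up to `-4`.
  by_cases h₁ : (b + β) ^ 2 + (a - α) ^ 2 = 0
  · refine ⟨-(a + α), b - β, fun h₂ => ?_, by linear_combination hαβ - hab, by ring⟩
    exact mul_self_ne_zero.2 (two_ne_zero : (2 : F) ≠ 0)
      (by linear_combination -h₁ - h₂ + 2 * hab + 2 * hαβ)
  · exact ⟨b + β, a - α, h₁, by ring, by linear_combination hab - hαβ⟩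

theorem exists_isUnit_mul_eq_mul_of_sq_add_sq [NeZero (2 : F)] {a b α β : F}
    (hab : a ^ 2 + b ^ 2 = -1) (hαβ : α ^ 2 + β ^ 2 = -1) :
    ∃ P : Matrix (Fin 2) (Fin 2) F, IsUnit P ∧
      !![a, b; b, -a] * P = P * !![α, β; β, -α] ∧
      !![b, -a; -a, -b] * P = P * !![β, -α; -α, -β] := by
  obtain ⟨p, q, hpq, h₁, h₂⟩ := exists_mul_eq_mul_of_sq_add_sq hab hαβ
  refine ⟨!![p, q; -q, p], ?_, ?_, ?_⟩
  · rw [Matrix.isUnit_iff_isUnit_det, Matrix.det_fin_two_of, isUnit_iff_ne_zero]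
    exact fun h₀ => hpq (by linear_combination h₀)
  all_goals
    ext i j; fin_cases i <;> fin_cases j <;> simp [Matrix.mul_apply] <;> grind

theorem exists_units_conj_of_sq_add_sq [NeZero (2 : F)] {a b α β : F}
    (hab : a ^ 2 + b ^ 2 = -1) (hαβ : α ^ 2 + β ^ 2 = -1)
    (ρ σ : ℍ[R] →ₐ[R] Matrix (Fin 2) (Fin 2) F)
    (hρi : ρ ⟨0, 1, 0, 0⟩ = !![a, b; b, -a]) (hρj : ρ ⟨0, 0, 1, 0⟩ = !![b, -a; -a, -b])
    (hσi : σ ⟨0, 1, 0, 0⟩ = !![α, β; β, -α]) (hσj : σ ⟨0, 0, 1, 0⟩ = !![β, -α; -α, -β]) :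
    ∃ P : (Matrix (Fin 2) (Fin 2) F)ˣ, ∀ q, ρ q = (P : Matrix (Fin 2) (Fin 2) F) * σ q *
      ((P⁻¹ : (Matrix (Fin 2) (Fin 2) F)ˣ) : Matrix (Fin 2) (Fin 2) F) := by
  obtain ⟨P, hP, hi, hj⟩ := exists_isUnit_mul_eq_mul_of_sq_add_sq hab hαβ
  refine ⟨hP.unit, fun q => ?_⟩
  have hconj : ρ = (MulSemiringAction.toAlgHom R _ (ConjAct.toConjAct hP.unit)).comp σ := by
    refine Quaternion.hom_ext ?_ ?_
    · change ρ ⟨0, 1, 0, 0⟩ = ConjAct.toConjAct hP.unit • σ ⟨0, 1, 0, 0⟩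
      rw [ConjAct.units_smul_def, ConjAct.ofConjAct_toConjAct, Units.eq_mul_inv_iff_mul_eq, hρi,
        hσi, IsUnit.unit_spec, hi]
    · change ρ ⟨0, 0, 1, 0⟩ = ConjAct.toConjAct hP.unit • σ ⟨0, 0, 1, 0⟩
      rw [ConjAct.units_smul_def, ConjAct.ofConjAct_toConjAct, Units.eq_mul_inv_iff_mul_eq, hρj,
        hσj, IsUnit.unit_spec, hj]
  simp [hconj, ConjAct.units_smul_def]

/-- **Lemma 6.1.** Let `A = (-1,-1)_ℚ` be the rational quaternion
algebra, `K/ℚ` a field extension, and `M` the 2-dimensional `A_K`-module given by the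
representation `ρ` with `i ↦ [[a,b],[b,-a]]`, `j ↦ [[b,-a],[-a,-b]]`, where
`a² + b² = -1` in `K`.  For an intermediate field `ℚ ⊆ E ⊆ K` the following are
equivalent: (a) `M` descends to `E` (i.e. `ρ` is conjugate to a representation with
entries in `E`); (b) `A` splits over `E`; (c) there are `a₀, b₀ ∈ E` with
`a₀² + b₀² = -1`. -/
theorem quaternion_module_descends_iff
    (K : Type) [Field K] [Algebra ℚ K]
    (E : Type) [Field E] [Algebra ℚ E] [Algebra E K] [IsScalarTower ℚ E K]
    (a b : K) (hab : a ^ 2 + b ^ 2 = -1)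
    (ρ : ℍ[ℚ] →ₐ[ℚ] Matrix (Fin 2) (Fin 2) K)
    (hρi : ρ ⟨0, 1, 0, 0⟩ = !![a, b; b, -a])
    (hρj : ρ ⟨0, 0, 1, 0⟩ = !![b, -a; -a, -b]) :
    [ -- (a) `M` descends to `E`
      ∃ (σ : ℍ[ℚ] →ₐ[ℚ] Matrix (Fin 2) (Fin 2) E) (P : (Matrix (Fin 2) (Fin 2) K)ˣ),
        ∀ q : ℍ[ℚ], ρ q = (P : Matrix (Fin 2) (Fin 2) K) * (σ q).map (algebraMap E K) *
          ((P⁻¹ : (Matrix (Fin 2) (Fin 2) K)ˣ) : Matrix (Fin 2) (Fin 2) K),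
      -- (b) the quaternion algebra splits over `E`
      Nonempty ((E ⊗[ℚ] ℍ[ℚ]) ≃ₐ[E] Matrix (Fin 2) (Fin 2) E),
      -- (c) `-1` is a sum of two squares in `E`
      ∃ a₀ b₀ : E, a₀ ^ 2 + b₀ ^ 2 = -1 ].TFAE := by
  have : CharZero E := algebraRat.charZero E
  have : CharZero K := algebraRat.charZero K
  tfae_have 1 → 3 := fun ⟨σ, _, _⟩ => exists_sq_add_sq_eq_neg_one_of_algHom σ
  tfae_have 2 → 3 := fun ⟨φ⟩ => exists_sq_add_sq_eq_neg_one_of_algHom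
    ((φ.toAlgHom.restrictScalars ℚ).comp Algebra.TensorProduct.includeRight)
  tfae_have 3 → 2 := fun ⟨_, _, h⟩ => nonempty_algEquiv_matrix_of_sq_add_sq h
  tfae_have 3 → 1 := by
    rintro ⟨a₀, b₀, h₀⟩
    let ι := IsScalarTower.toAlgHom ℚ E K
    have hι : ι a₀ ^ 2 + ι b₀ ^ 2 = -1 := by simpa using congrArg ι h₀
    let σ := quaternionRepOfSqAddSq ℚ h₀
    refine ⟨σ, exists_units_conj_of_sq_add_sq hab hι ρ (ι.mapMatrix.comp σ) hρi hρj ?_ ?_⟩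
    · refine (congrArg ι.mapMatrix (quaternionRepOfSqAddSq_i h₀)).trans ?_
      ext i j; fin_cases i <;> fin_cases j <;> simp
    · refine (congrArg ι.mapMatrix (quaternionRepOfSqAddSq_j h₀)).trans ?_
      ext i j; fin_cases i <;> fin_cases j <;> simp
  tfae_finish
end

section
/- Let S ⊆ ℙ^{r-1} be a projective variety defined over a field K, and suppose the hyperplane H given by a₁x₁ + ⋯ + a_r x_r = 0 (aᵢ ∈ K, not all zero) is an irreducible component of S. If S is defined over a subfield K₀ ⊆ K, then every ratio a_j/a_l (with a_l ≠ 0) is algebraic over K₀. -/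
open MvPolynomial

attribute [local instance] MvPolynomial.gradedAlgebra

/-!
Pick a nonzero `g` in the ideal over `K₀`; the linear form divides it over `K`. After scaling so
that `a_l = 1`, view `g` as a polynomial `Q(X, Y)` in `X = x_j` and `Y = x_l` over
`K₀[other variables]`. Divisibility says that `Q` vanishes at `Y = -(a_j X + u)`, where `u` does not
involve `X`. In the coefficient of the top total degree in `(X, Y)` the term `u` drops out,
leaving `Σ_d q_d (-a_j)^d = 0`, where the `q_d` are the coefficients of the top homogeneous
component of `Q`, not all zero. Any monomial coefficient of this relation is a nonzero polynomial
over `K₀` vanishing at `-a_j`.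
-/

namespace Polynomial.Bivariate

variable {A B : Type*} [CommSemiring A] [CommSemiring B]

noncomputable def totalNatDegree (Q : A[X][Y]) : ℕ :=
  Q.support.sup fun d => (Q.coeff d).natDegree + d

/-- The top homogeneous component of `Q(X, Y)`, evaluated at `X = 1`. -/
noncomputable def leadingForm (Q : A[X][Y]) : A[X] :=
  ∑ d ∈ Q.support, C ((Q.coeff d).coeff (totalNatDegree Q - d)) * X ^ d

lemma natDegree_coeff_add_le_totalNatDegree {Q : A[X][Y]} {d : ℕ} (hd : d ∈ Q.support) :
    (Q.coeff d).natDegree + d ≤ totalNatDegree Q :=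
  Finset.le_sup (f := fun d => (Q.coeff d).natDegree + d) hd

theorem coeff_eval_totalNatDegree {Q : A[X][Y]} {w : A[X]} (hw : w.natDegree ≤ 1) :
    (Q.eval w).coeff (totalNatDegree Q) = (leadingForm Q).eval (w.coeff 1) := by
  rw [eval_eq_sum, sum_def, finsetSum_coeff, leadingForm, eval_finsetSum]
  refine Finset.sum_congr rfl fun d hd => ?_
  have hdeg := natDegree_coeff_add_le_totalNatDegree hd
  have hsplit : totalNatDegree Q = (totalNatDegree Q - d) + d * 1 := by omega
  conv_lhs => rw [hsplit]
  rw [coeff_mul_add_eq_of_natDegree_le (Nat.le_sub_of_add_le hdeg) (natDegree_pow_le_of_le d hw),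
    coeff_pow_of_natDegree_le hw, eval_C_mul, eval_X_pow]

theorem leadingForm_ne_zero {Q : A[X][Y]} (hQ : Q ≠ 0) : leadingForm Q ≠ 0 := by
  obtain ⟨d, hd, hmax⟩ := Finset.exists_mem_eq_sup Q.support (support_nonempty.mpr hQ)
    fun d => (Q.coeff d).natDegree + d
  refine fun h => absurd (congrArg (coeff · d) h) ?_
  rw [coeff_zero, leadingForm, finsetSum_coeff, Finset.sum_eq_single d]
  · rw [coeff_C_mul_X_pow, if_pos rfl, totalNatDegree, hmax, Nat.add_sub_cancel]
    exact leadingCoeff_ne_zero.mpr (mem_support_iff.mp hd)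
  · intro e _ hed
    rw [coeff_C_mul_X_pow, if_neg hed.symm]
  · exact fun h => absurd hd h

theorem leadingForm_map {φ : A →+* B} (hφ : Function.Injective φ) (Q : A[X][Y]) :
    leadingForm (Q.map (mapRingHom φ)) = (leadingForm Q).map φ := by
  have hmap : Function.Injective (mapRingHom φ) := map_injective φ hφ
  have hdeg : totalNatDegree (Q.map (mapRingHom φ)) = totalNatDegree Q := by
    simp only [totalNatDegree, support_map_of_injective _ hmap, coeff_map,
      coe_mapRingHom, natDegree_map_eq_of_injective hφ]
  simp only [leadingForm, hdeg, support_map_of_injective _ hmap, coeff_map,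
    coe_mapRingHom, Polynomial.map_sum, Polynomial.map_mul, map_C, Polynomial.map_pow, map_X]

end Polynomial.Bivariate

theorem isAlgebraic_of_eval_C_map_eq_zero {τ R A : Type*} [CommRing R] [CommRing A]
    [Algebra R A] {P : Polynomial (MvPolynomial τ R)} (hP : P ≠ 0) {c : A}
    (h : (P.map (map (algebraMap R A))).eval (C c) = 0) : IsAlgebraic R c := by
  obtain ⟨d, hd⟩ := Polynomial.support_nonempty.mpr hP
  obtain ⟨m, hm⟩ := ne_zero_iff.mp (Polynomial.mem_support_iff.mp hd)
  refine ⟨∑ e ∈ P.support, Polynomial.monomial e (coeff m (P.coeff e)), fun h0 => hm ?_, ?_⟩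
  · simpa [Polynomial.finsetSum_coeff, Polynomial.coeff_monomial, hd] using congrArg (·.coeff d) h0
  · have hcoeff := congrArg (coeff m) h
    rw [Polynomial.eval_map, Polynomial.eval₂_eq_sum, Polynomial.sum_def, coeff_sum,
      coeff_zero] at hcoeff
    rw [map_sum, ← hcoeff]
    refine Finset.sum_congr rfl fun e _ => ?_
    rw [Polynomial.aeval_monomial, ← C_pow, mul_comm (map _ _), coeff_C_mul, coeff_map, mul_comm]

namespace MvPolynomial

variable (R : Type*) {S : Type*} (τ : Type*) [CommSemiring R] [CommSemiring S]

noncomputable def optionOptionEquivLeft :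
    MvPolynomial (Option (Option τ)) R ≃ₐ[R] Polynomial (Polynomial (MvPolynomial τ R)) :=
  (optionEquivLeft R (Option τ)).trans (Polynomial.mapAlgEquiv (optionEquivLeft R τ))

variable {R τ}

@[simp] lemma optionOptionEquivLeft_C (k : R) :
    optionOptionEquivLeft R τ (C k) = Polynomial.C (Polynomial.C (C k)) := by
  simp [optionOptionEquivLeft, optionEquivLeft_C]

@[simp] lemma optionOptionEquivLeft_X_none :
    optionOptionEquivLeft R τ (X none) = Polynomial.X := by
  simp [optionOptionEquivLeft, optionEquivLeft_X_none]

@[simp] lemma optionOptionEquivLeft_X_some (i : Option τ) :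
    optionOptionEquivLeft R τ (X (some i)) = Polynomial.C (optionEquivLeft R τ (X i)) := by
  simp [optionOptionEquivLeft, optionEquivLeft_X_some]

lemma optionOptionEquivLeft_map (f : R →+* S) (p : MvPolynomial (Option (Option τ)) R) :
    optionOptionEquivLeft S τ (map f p) =
      (optionOptionEquivLeft R τ p).map (Polynomial.mapRingHom (map f)) := by
  induction p using MvPolynomial.induction_on with
  | C k => simp
  | add p q hp hq => simp [hp, hq]
  | mul_X p i hp =>
    rcases i with _ | _ | t <;> simp [hp, optionEquivLeft_X_none, optionEquivLeft_X_some]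

end MvPolynomial

open Polynomial.Bivariate in
theorem isAlgebraic_of_X_add_linearForm_dvd_map {τ K₀ K : Type*} [Fintype τ] [Field K₀] [Field K]
    [Algebra K₀ K] {g : MvPolynomial (Option (Option τ)) K₀} (hg : g ≠ 0) {b : Option τ → K}
    (h : X none + ∑ i, C (b i) * X (some i) ∣ map (algebraMap K₀ K) g) :
    IsAlgebraic K₀ (b none) := by
  set φ : MvPolynomial τ K₀ →+* MvPolynomial τ K := map (algebraMap K₀ K)
  have hφ : Function.Injective φ := map_injective _ (algebraMap K₀ K).injective
  set Q₀ := optionOptionEquivLeft K₀ τ g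
  set w : Polynomial (MvPolynomial τ K) :=
    -(Polynomial.C (C (b none)) * Polynomial.X + Polynomial.C (∑ t, C (b (some t)) * X t))
  have hroot : (Q₀.map (Polynomial.mapRingHom φ)).eval w = 0 := by
    have hdvd := map_dvd (optionOptionEquivLeft K τ) h
    rw [optionOptionEquivLeft_map] at hdvd
    refine Polynomial.dvd_iff_isRoot.mp (dvd_trans ?_ hdvd)
    simp only [w, neg_add_rev, map_sum, map_mul, map_add, map_neg, Fintype.sum_option,
      optionOptionEquivLeft_X_none, optionOptionEquivLeft_C, optionOptionEquivLeft_X_some,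
      optionEquivLeft_X_none, optionEquivLeft_X_some]
    exact dvd_of_eq (by ring)
  have hw : w.natDegree ≤ 1 := (Polynomial.natDegree_neg _).trans_le Polynomial.natDegree_linear_le
  have hw1 : w.coeff 1 = C (-b none) := by simp [w]
  have hQ₀ : Q₀ ≠ 0 := EmbeddingLike.map_ne_zero_iff.mpr hg
  refine neg_neg (b none) ▸ (isAlgebraic_of_eval_C_map_eq_zero (leadingForm_ne_zero hQ₀) ?_).neg
  rw [← leadingForm_map hφ, ← hw1, ← coeff_eval_totalNatDegree hw, hroot, Polynomial.coeff_zero]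

theorem linearForm_ne_zero {σ R : Type*} [Fintype σ] [CommSemiring R] [Nontrivial R]
    {a : σ → R} (ha : a ≠ 0) : ∑ i, C (a i) * X i ≠ 0 := by
  classical
  obtain ⟨i, hi⟩ := Function.ne_iff.mp ha
  contrapose! hi
  simpa [coeff_sum, coeff_C_mul, coeff_X, Finsupp.single_left_inj] using
    congrArg (coeff (Finsupp.single i 1)) hi

theorem isAlgebraic_div_of_linearForm_dvd_map {σ K₀ K : Type*} [Fintype σ] [DecidableEq σ]
    [Field K₀] [Field K] [Algebra K₀ K] {g : MvPolynomial σ K₀} (hg : g ≠ 0) {a : σ → K}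
    (h : ∑ i, C (a i) * X i ∣ map (algebraMap K₀ K) g) {j l : σ} (hl : a l ≠ 0) :
    IsAlgebraic K₀ (a j / a l) := by
  obtain rfl | hjl := eq_or_ne j l
  · rw [div_self hl]
    exact isAlgebraic_one
  let e : σ ≃ Option (Option {k : {k // k ≠ l} // k ≠ ⟨j, hjl⟩}) :=
    (Equiv.optionSubtypeNe l).symm.trans (Equiv.optionSubtypeNe _).symm.optionCongr
  let b : Option {k : {k // k ≠ l} // k ≠ ⟨j, hjl⟩} → K := fun i => a (e.symm (some i)) / a l
  have hrename :
      rename e (∑ i, C (a i) * X i) = C (a l) * (X none + ∑ i, C (b i) * X (some i)) := by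
    rw [map_sum, Fintype.sum_equiv e _ (fun o => C (a (e.symm o)) * X o) (fun x => by simp),
      Fintype.sum_option]
    simp [b, e, mul_add, Finset.mul_sum, ← mul_assoc, ← C_mul, mul_div_cancel₀ _ hl]
  have hdvd : X none + ∑ i, C (b i) * X (some i) ∣ map (algebraMap K₀ K) (rename e g) := by
    rw [map_rename]
    exact (Dvd.intro_left _ hrename.symm).trans (map_dvd _ h)
  have hg' : rename e g ≠ 0 := (map_ne_zero_iff _ (rename_injective e e.injective)).mpr hg
  simpa [b, e] using isAlgebraic_of_X_add_linearForm_dvd_map hg' hdvd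

theorem hyperplane_component_ratios_algebraic_general
    (r : ℕ) (K₀ K : Type) [Field K₀] [Field K] [Algebra K₀ K]
    (a : Fin r → K) (ha : a ≠ 0)
    (I₀ : Ideal (MvPolynomial (Fin r) K₀))
    (hH : Ideal.span {∑ i, C (a i) * X i} ∈
      (I₀.map (MvPolynomial.map (algebraMap K₀ K))).minimalPrimes) :
    ∀ j l : Fin r, a l ≠ 0 → IsAlgebraic K₀ (a j / a l) := by
  have hI₀ : I₀ ≠ ⊥ := by
    rintro rfl
    rw [Ideal.map_bot] at hH
    have hbot := le_bot_iff.mp (hH.2 ⟨Ideal.isPrime_bot, le_rfl⟩ bot_le)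
    exact linearForm_ne_zero ha (Ideal.span_singleton_eq_bot.mp hbot)
  obtain ⟨g, hgI, hg⟩ := Submodule.exists_mem_ne_zero_of_ne_bot hI₀
  have hdvd := Ideal.mem_span_singleton.mp (hH.1.2 (Ideal.mem_map_of_mem _ hgI))
  exact fun j l hl => isAlgebraic_div_of_linearForm_dvd_map hg hdvd hl

/-- **Lemma 7.2.** Let `S ⊆ ℙ^{r-1}` be a projective variety over `K`
(given by a homogeneous ideal), and suppose the hyperplane
`H : a₁x₁ + ⋯ + a_r x_r = 0` is an irreducible component of `S` (i.e. the ideal of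
`H` is a minimal prime over the ideal of `S`).  If `S` is defined over a subfield
`K₀ ⊆ K` (its ideal is extended from an ideal over `K₀`), then every ratio
`a_j / a_l` (with `a_l ≠ 0`) is algebraic over `K₀`. -/
theorem hyperplane_component_ratios_algebraic
    (r : ℕ) (K₀ K : Type) [Field K₀] [Field K] [Algebra K₀ K]
    (a : Fin r → K) (ha : a ≠ 0)
    (I₀ : Ideal (MvPolynomial (Fin r) K₀))
    (hhom : I₀.IsHomogeneous (homogeneousSubmodule (Fin r) K₀))
    (hH : Ideal.span {∑ i, C (a i) * X i} ∈
      (I₀.map (MvPolynomial.map (algebraMap K₀ K))).minimalPrimes) :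
    ∀ j l : Fin r, a l ≠ 0 → IsAlgebraic K₀ (a j / a l) :=
  hyperplane_component_ratios_algebraic_general r K₀ K a ha I₀ hH
end

section
/- Let F be a field of characteristic p > 0, D a finite p-group that is not cyclic, so D/Φ(D) is elementary abelian of rank r ≥ 2 with generators g₁,…,g_r. For n > 0 let K = F(t_{1,1},…,t_{n,r}) be a rational function field and for 1 ≤ i ≤ n let M_i be the 2-dimensional KD-module with g_j acting by [[1, t_{i,j}],[0,1]]. Then M_i is a module over KD/J²(KD), and its kernel, viewed inside J(KD)/J²(KD) with basis (g₁−1),…,(g_r−1), is the hyperplane H_i = {Σ_j λ_j(g_j−1) : Σ_j t_{i,j} λ_j = 0}. -/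
/-!
Every `ρ i` takes values in the matrices `!![a, b; 0, a]`: the generators `g j` land there, and
this subalgebra is closed under inversion, so all of `D` does. Reading off `a` is then an algebra
map `KD → K`; its kernel is a maximal ideal, hence contains `J(KD)`, so the radical acts through
strictly upper triangular matrices, whose pairwise products vanish. On the other hand
`ρ i (Σ λ_j (g_j - 1)) = (Σ_j t_{i,j} λ_j) E₁₂`.
-/

open MonoidAlgebra Matrix
open scoped Ring

theorem MonoidAlgebra.algHom_mem_of_closure_eq_top {k G A : Type*} [CommSemiring k] [Group G]
    [Semiring A] [Algebra k A] (φ : MonoidAlgebra k G →ₐ[k] A) (S : Subalgebra k A)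
    (hS : ∀ a ∈ S, a⁻¹ʳ ∈ S) {s : Set G} (hs : Subgroup.closure s = ⊤)
    (hφs : ∀ g ∈ s, φ (of k G g) ∈ S) (x : MonoidAlgebra k G) : φ x ∈ S := by
  have map_of_inv (g : G) : φ (of k G g⁻¹) = (φ (of k G g))⁻¹ʳ := by
    have hg : φ (of k G g) * φ (of k G g⁻¹) = 1 := by
      rw [← map_mul, ← map_mul, mul_inv_cancel, map_one, map_one]
    rw [← mul_one (φ (of k G g))⁻¹ʳ, ← hg,
      Ring.inverse_mul_cancel_left _ _ (((Group.isUnit g).map (of k G)).map φ)]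
  let H : Subgroup G :=
    { carrier := {g | φ (of k G g) ∈ S}
      one_mem' := by rw [Set.mem_ofPred_eq, map_one, map_one]; exact S.one_mem
      mul_mem' := fun ha hb => by
        rw [Set.mem_ofPred_eq, map_mul, map_mul]; exact S.mul_mem ha hb
      inv_mem' := fun {g} hg => by rw [Set.mem_ofPred_eq, map_of_inv]; exact hS _ hg }
  have hH (g : G) : φ (of k G g) ∈ S :=
    (Subgroup.closure_le H).2 hφs (hs ▸ Subgroup.mem_top g)
  induction x using MonoidAlgebra.induction_on with
  | of g => exact hH g
  | add x y hx hy => rw [map_add]; exact S.add_mem hx hy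
  | smul c x hx => rw [map_smul]; exact S.smul_mem hx c

theorem AlgHom.jacobson_bot_le_ker {K A : Type*} [Field K] [Ring A] [Algebra K A]
    (f : A →ₐ[K] K) : (⊥ : Ideal A).jacobson ≤ RingHom.ker f :=
  sInf_le ⟨bot_le,
    RingHom.ker_isMaximal_of_surjective _ fun c => ⟨algebraMap K A c, f.commutes c⟩⟩

namespace Matrix

variable (K : Type*) [CommRing K]

/-- The matrices `!![a, b; 0, a]`: a copy of the dual numbers `K[ε]`, with `ε = single 0 1 1`. -/
def dualNumberSubalgebra : Subalgebra K (Matrix (Fin 2) (Fin 2) K) where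
  carrier := {M | M 1 0 = 0 ∧ M 0 0 = M 1 1}
  mul_mem' := by
    rintro M N ⟨hM₁, hM₂⟩ ⟨hN₁, hN₂⟩
    simp [mul_apply, Fin.sum_univ_two, hM₁, hM₂, hN₁, hN₂, mul_comm]
  add_mem' := by
    rintro M N ⟨hM₁, hM₂⟩ ⟨hN₁, hN₂⟩
    simp [hM₁, hM₂, hN₁, hN₂]
  algebraMap_mem' c := by simp [algebraMap_eq_diagonal]

variable {K}

theorem mem_dualNumberSubalgebra {M : Matrix (Fin 2) (Fin 2) K} :
    M ∈ dualNumberSubalgebra K ↔ M 1 0 = 0 ∧ M 0 0 = M 1 1 :=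
  Iff.rfl

theorem fin_two_of_mem_dualNumberSubalgebra (a b : K) :
    !![a, b; 0, a] ∈ dualNumberSubalgebra K := by
  simp [mem_dualNumberSubalgebra]

theorem ringInverse_mem_dualNumberSubalgebra {M : Matrix (Fin 2) (Fin 2) K}
    (hM : M ∈ dualNumberSubalgebra K) : M⁻¹ʳ ∈ dualNumberSubalgebra K := by
  obtain ⟨h₁, h₂⟩ := hM
  rw [← nonsing_inv_eq_ringInverse, inv_def, adjugate_fin_two, h₁, h₂, neg_zero]
  exact Subalgebra.smul_mem _ (fin_two_of_mem_dualNumberSubalgebra _ _) _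

def dualNumberSubalgebra.fst : dualNumberSubalgebra K →ₐ[K] K where
  toFun M := M.1 0 0
  map_one' := rfl
  map_mul' M N := by simp [mul_apply, Fin.sum_univ_two, N.2.1]
  map_zero' := rfl
  map_add' _ _ := rfl
  commutes' _ := by simp [algebraMap_eq_diagonal]

theorem mul_eq_zero_fin_two_of_mem_dualNumberSubalgebra {M N : Matrix (Fin 2) (Fin 2) K}
    (hM : M ∈ dualNumberSubalgebra K) (hN : N ∈ dualNumberSubalgebra K)
    (hM₀ : M 0 0 = 0) (hN₀ : N 0 0 = 0) : M * N = 0 := by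
  obtain ⟨hM₁, hM₂⟩ := hM
  obtain ⟨hN₁, hN₂⟩ := hN
  rw [hM₀] at hM₂
  rw [hN₀] at hN₂
  ext i j
  fin_cases i <;> fin_cases j <;>
    simp [mul_apply, Fin.sum_univ_two, hM₀, hM₁, ← hM₂, hN₀, hN₁, ← hN₂]

theorem fin_two_unitriangular_sub_one (s : K) : !![1, s; 0, 1] - 1 = single 0 1 s := by
  ext i j
  fin_cases i <;> fin_cases j <;> simp

theorem single_eq_zero_iff {m n α : Type*} [DecidableEq m] [DecidableEq n] [Zero α]
    {i : m} {j : n} {a : α} : single i j a = 0 ↔ a = 0 :=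
  ⟨fun h => by simpa using congr_fun₂ h i j, fun h => h ▸ single_zero i j⟩

end Matrix

theorem kernel_of_generic_unipotent_module_general
    (D : Type) [Group D]
    (n r : ℕ)
    (g : Fin r → D) (hgen : Subgroup.closure (Set.range g) = ⊤)
    (K : Type) [Field K]
    (t : Fin n → Fin r → K)
    (ρ : Fin n → (MonoidAlgebra K D →ₐ[K] Matrix (Fin 2) (Fin 2) K))
    (hρ : ∀ i j, ρ i (MonoidAlgebra.of K D (g j)) = !![1, t i j; 0, 1]) :
    (∀ (i : Fin n) (x y : MonoidAlgebra K D),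
      x ∈ (⊥ : Ideal (MonoidAlgebra K D)).jacobson →
      y ∈ (⊥ : Ideal (MonoidAlgebra K D)).jacobson → ρ i (x * y) = 0) ∧
    (∀ (i : Fin n) (lam : Fin r → K),
      ρ i (∑ j, lam j • (MonoidAlgebra.of K D (g j) - 1)) = 0 ↔
        ∑ j, t i j * lam j = 0) := by
  have hρS (i : Fin n) (x : MonoidAlgebra K D) : ρ i x ∈ dualNumberSubalgebra K := by
    refine algHom_mem_of_closure_eq_top (ρ i) _ (fun _ => ringInverse_mem_dualNumberSubalgebra)
      hgen ?_ x
    rintro _ ⟨j, rfl⟩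
    exact hρ i j ▸ fin_two_of_mem_dualNumberSubalgebra 1 (t i j)
  refine ⟨fun i x y hx hy => ?_, fun i lam => ?_⟩
  · have hJ : ∀ z ∈ (⊥ : Ideal (MonoidAlgebra K D)).jacobson, ρ i z 0 0 = 0 := fun z hz =>
      AlgHom.jacobson_bot_le_ker (dualNumberSubalgebra.fst.comp ((ρ i).codRestrict _ (hρS i))) hz
    rw [map_mul]
    exact mul_eq_zero_fin_two_of_mem_dualNumberSubalgebra (hρS i x) (hρS i y) (hJ x hx) (hJ y hy)
  · have hsum :
        ρ i (∑ j, lam j • (of K D (g j) - 1)) = single 0 1 (∑ j, t i j * lam j) := by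
      simp only [map_sum, map_smul, map_sub, map_one, hρ, fin_two_unitriangular_sub_one,
        Matrix.smul_single, smul_eq_mul, mul_comm (lam _)]
      exact (map_sum (singleAddMonoidHom (α := K) (0 : Fin 2) (1 : Fin 2)) _ _).symm
    rw [hsum, single_eq_zero_iff]

/-- **Section 7.** Let `F` be a field of characteristic `p > 0` and
`D` a non-cyclic finite `p`-group, generated by `g₁, …, g_r` (whose images form a
basis of the rank-`r ≥ 2` elementary abelian quotient `D/Φ(D)`).  Let
`K = F(t_{1,1}, …, t_{n,r})` be a rational function field and, for `1 ≤ i ≤ n`, let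
`M_i` be the 2-dimensional `KD`-module on which `g_j` acts by `[[1, t_{i,j}],[0,1]]`,
with corresponding representation `ρ i : KD → Mat₂(K)`.  Then:
(1) `J²(KD)` is contained in the kernel of `ρ i`, so `M_i` is a module over
`KD/J²(KD)`; and
(2) inside `J(KD)/J²(KD)`, with basis the images of `(g_j − 1)`, the kernel of `M_i`
is the hyperplane `H_i = {Σ_j λ_j (g_j − 1) : Σ_j t_{i,j} λ_j = 0}`. -/
theorem kernel_of_generic_unipotent_module
    (p : ℕ) [Fact p.Prime] (F : Type) [Field F] [CharP F p]
    (D : Type) [Group D] [Fintype D] (hD : IsPGroup p D) (hnc : ¬ IsCyclic D)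
    (n r : ℕ) (hn : 0 < n) (hr : 2 ≤ r)
    (g : Fin r → D) (hgen : Subgroup.closure (Set.range g) = ⊤)
    (K : Type) [Field K] [Algebra (MvPolynomial (Fin n × Fin r) F) K]
    [IsFractionRing (MvPolynomial (Fin n × Fin r) F) K]
    (t : Fin n → Fin r → K)
    (ht : ∀ i j, t i j = algebraMap (MvPolynomial (Fin n × Fin r) F) K
      (MvPolynomial.X (i, j)))
    (ρ : Fin n → (MonoidAlgebra K D →ₐ[K] Matrix (Fin 2) (Fin 2) K))
    (hρ : ∀ i j, ρ i (MonoidAlgebra.of K D (g j)) = !![1, t i j; 0, 1]) :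
    (∀ (i : Fin n) (x y : MonoidAlgebra K D),
      x ∈ (⊥ : Ideal (MonoidAlgebra K D)).jacobson →
      y ∈ (⊥ : Ideal (MonoidAlgebra K D)).jacobson → ρ i (x * y) = 0) ∧
    (∀ (i : Fin n) (lam : Fin r → K),
      ρ i (∑ j, lam j • (MonoidAlgebra.of K D (g j) - 1)) = 0 ↔
        ∑ j, t i j * lam j = 0) :=
  kernel_of_generic_unipotent_module_general D n r g hgen K t ρ hρ
end
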